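/- No symmetric memoryless algorithm solves the exact midpoint localization problem for all lengths: there is no function M : {L,R} × ℝ → ℝ satisfying M(L,d) = −M(R,d) for all d, such that for every real D with 1 < D < ∞ the induced dynamics F_D maps [-D,D] into [-D,D] and for every x₀ ∈ [-D,D] there exists a finite integer n ≥ 0 with F_D^n(x₀) = 0. -/
import Mathlib


inductive Side
  | L
  | R

/-- The exact dynamics on `[-D, D]` induced by the memoryless algorithm `M`:
the walker at `x > 0` observes `(R, D - x)`, at `x < 0` observes `(L, D + x)`,
and moves by the displacement `M` prescribes; it stays at the midpoint `0`. -/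
noncomputable def step (M : Side × ℝ → ℝ) (D x : ℝ) : ℝ :=
  if 0 < x then x + M (Side.R, D - x)
  else if x < 0 then x + M (Side.L, D + x)
  else 0

theorem no_symmetric_algorithm :
    ¬ ∃ M : Side × ℝ → ℝ, (∀ d : ℝ, M (Side.L, d) = - M (Side.R, d)) ∧
      ∀ D : ℝ, 1 < D →
        (∀ x ∈ Set.Icc (-D) D, step M D x ∈ Set.Icc (-D) D) ∧
        (∀ x₀ ∈ Set.Icc (-D) D, ∃ n : ℕ, (step M D)^[n] x₀ = 0) := by
  rintro ⟨M, hsym, hM⟩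
  by_cases hc : ∃ v : ℝ, 0 ≤ v ∧ M (Side.R, v) < 0 ∧ M (Side.R, v) < 2 * v - 2
  · -- Case 1: a "mirror" 2-cycle exists, contradiction.
    obtain ⟨v, hv0, hm0, hm2⟩ := hc
    set m := M (Side.R, v) with hm
    set D := v - m / 2 with hD
    have hD1 : 1 < D := by rw [hD]; linarith
    obtain ⟨-, hhit⟩ := hM D hD1
    set x₀ := -(m / 2) with hx₀
    have hx₀pos : 0 < x₀ := by rw [hx₀]; linarith
    have hx₀mem : x₀ ∈ Set.Icc (-D) D := by
      constructor <;> (rw [hx₀, hD]; linarith)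
    obtain ⟨n, hn⟩ := hhit x₀ hx₀mem
    have hstep1 : step M D x₀ = -x₀ := by
      rw [step, if_pos hx₀pos]
      have hdv : D - x₀ = v := by rw [hD, hx₀]; ring
      rw [hdv, ← hm, hx₀]; ring
    have hstep2 : step M D (-x₀) = x₀ := by
      rw [step, if_neg (by linarith), if_pos (by linarith)]
      have hdv : D + -x₀ = v := by rw [hD, hx₀]; ring
      rw [hdv, hsym, ← hm, hx₀]; ring
    have key : ∀ k : ℕ, (step M D)^[k] x₀ = x₀ ∨ (step M D)^[k] x₀ = -x₀ := by
      intro k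
      induction k with
      | zero => left; rfl
      | succ k ih =>
        rw [Function.iterate_succ_apply']
        rcases ih with h | h
        · right; rw [h, hstep1]
        · left; rw [h, hstep2]
      
    rcases key n with h | h <;> rw [hn] at h
    · exact absurd h.symm (ne_of_gt hx₀pos)
    · have : x₀ = 0 := by linarith [h]
      exact absurd this (ne_of_gt hx₀pos)
  · -- Case 2: displacements never go too far left; a positive point stays positive.
    push_neg at hc
    obtain ⟨hrange, hhit⟩ := hM 3 (by norm_num)
    obtain ⟨n, hn⟩ := hhit 3 ⟨by norm_num, le_refl 3⟩
    have key : ∀ x : ℝ, x ∈ Set.Icc (-3 : ℝ) 3 → 0 < x →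
        0 < step M 3 x ∧ step M 3 x ∈ Set.Icc (-3 : ℝ) 3 := by
      intro x hx hxpos
      refine ⟨?_, hrange x hx⟩
      have hstep : step M 3 x = x + M (Side.R, 3 - x) := by
        rw [step, if_pos hxpos]
      have hd0 : 0 ≤ 3 - x := by linarith [hx.2]
      rcases le_or_gt 0 (M (Side.R, 3 - x)) with h | h
      · rw [hstep]; linarith
      · have h2 := hc (3 - x) hd0 h
        rw [hstep]; linarith
    have inv : ∀ k : ℕ, 0 < (step M 3)^[k] 3 ∧ (step M 3)^[k] 3 ∈ Set.Icc (-3 : ℝ) 3 := by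
      intro k
      induction k with
      | zero => exact ⟨by norm_num, by constructor <;> norm_num⟩
      | succ k ih =>
        rw [Function.iterate_succ_apply']
        exact ⟨(key _ ih.2 ih.1).1, (key _ ih.2 ih.1).2⟩
    have := (inv n).1
    rw [hn] at this
    exact lt_irrefl 0 this
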